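/- arXiv:1710.02296 — 5 statements merged into one kernel-verified Lean document; each statement's English description precedes it below -/
import Mathlib

section
/- The partial trace over any single tensor factor of the orthogonal projector P_+^M onto Sym^M(ℂ^d) equals (d_M^+ / d_{M-1}^+) · P_+^{M-1}, i.e. Tr_1[P_+^M] = ((M+d-1)/M) · P_+^{M-1}. -/
open scoped BigOperators

/-- `M`-fold tensor power `|φ⟩^{⊗M}` of a vector `φ ∈ ℂ^d`, as a vector on the
computational product basis `Fin M → Fin d`. -/
noncomputable def vecPow {d : ℕ} (M : ℕ) (φ : Fin d → ℂ) : (Fin M → Fin d) → ℂ :=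
  fun f => ∏ i, φ (f i)

/-- Rank-one operator `|v⟩⟨v|`. -/
noncomputable def projOp {n : Type*} [Fintype n] (v : n → ℂ) : Matrix n n ℂ :=
  Matrix.of fun i j => v i * star (v j)

/-- The orthogonal projector `P_+^M` onto the symmetric subspace of `(ℂ^d)^{⊗M}`. -/
noncomputable def symProj (d M : ℕ) : Matrix (Fin M → Fin d) (Fin M → Fin d) ℂ :=
  Matrix.of fun f g =>
    (∑ σ : Equiv.Perm (Fin M), if f = g ∘ σ then (1 : ℂ) else 0) / (Nat.factorial M : ℂ)

/-- `d_M^+ = C(M+d-1, M)`, the dimension of the symmetric subspace. -/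
def dPlus (d M : ℕ) : ℕ := (M + d - 1).choose M

section aux

variable {d M : ℕ}

private noncomputable def Edec (k : Fin (M + 1)) :
    Equiv.Perm (Fin (M + 1)) ≃ Option (Fin M) × Equiv.Perm (Fin M) :=
  (Equiv.permCongr (finSuccEquiv' k)).trans Equiv.Perm.decomposeOption

private lemma Edec_symm_apply_self (k : Fin (M + 1)) (c : Option (Fin M))
    (τ : Equiv.Perm (Fin M)) : (Edec k).symm (c, τ) k = (finSuccEquiv' k).symm c := by
  simp [Edec, Equiv.permCongr_symm, Equiv.permCongr_apply, Equiv.Perm.decomposeOption]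

private lemma Edec_symm_apply_succAbove (k : Fin (M + 1)) (c : Option (Fin M))
    (τ : Equiv.Perm (Fin M)) (b : Fin M) :
    (Edec k).symm (c, τ) (k.succAbove b)
      = (finSuccEquiv' k).symm (Equiv.swap none c (some (τ b))) := by
  simp [Edec, Equiv.permCongr_symm, Equiv.permCongr_apply, Equiv.Perm.decomposeOption]

private lemma cond_none (k : Fin (M + 1)) (i : Fin d) (f g : Fin M → Fin d)
    (τ : Equiv.Perm (Fin M)) :
    (k.insertNth i f = k.insertNth i g ∘ (Edec k).symm (none, τ)) ↔ f = g ∘ τ := by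
  rw [funext_iff, Fin.forall_iff_succAbove k, funext_iff]
  simp [Edec_symm_apply_self, Edec_symm_apply_succAbove, Function.comp,
    Fin.insertNth_apply_same, Fin.insertNth_apply_succAbove]

private lemma cond_some (k : Fin (M + 1)) (i : Fin d) (f g : Fin M → Fin d)
    (a : Fin M) (τ : Equiv.Perm (Fin M)) :
    (k.insertNth i f = k.insertNth i g ∘ (Edec k).symm (some a, τ))
      ↔ (i = g a ∧ f = g ∘ τ) := by
  rw [funext_iff, Fin.forall_iff_succAbove k, funext_iff]
  simp only [Function.comp_apply, Edec_symm_apply_self, Edec_symm_apply_succAbove,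
    Fin.insertNth_apply_same, Fin.insertNth_apply_succAbove, finSuccEquiv'_symm_some]
  constructor
  · rintro ⟨h1, h2⟩
    refine ⟨h1, fun b => ?_⟩
    have := h2 b
    by_cases hb : τ b = a
    · rw [hb, Equiv.swap_apply_right] at this
      simp only [finSuccEquiv'_symm_none, Fin.insertNth_apply_same] at this
      rw [this, h1, hb]
    · rw [Equiv.swap_apply_of_ne_of_ne (by simp) (by simpa using hb)] at this
      simpa using this
  · rintro ⟨h1, h2⟩
    refine ⟨h1, fun b => ?_⟩
    by_cases hb : τ b = a
    · rw [hb, Equiv.swap_apply_right]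
      simp only [finSuccEquiv'_symm_none, Fin.insertNth_apply_same]
      rw [h2 b, hb, h1]
    · rw [Equiv.swap_apply_of_ne_of_ne (by simp) (by simpa using hb)]
      simpa using h2 b

private lemma key_sum (k : Fin (M + 1)) (f g : Fin M → Fin d) :
    (∑ i : Fin d, ∑ σ : Equiv.Perm (Fin (M + 1)),
        if k.insertNth i f = k.insertNth i g ∘ σ then (1 : ℂ) else 0)
      = ((M + d : ℕ) : ℂ) * ∑ τ : Equiv.Perm (Fin M), if f = g ∘ τ then (1 : ℂ) else 0 := by
  have step1 : ∀ i : Fin d,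
      (∑ σ : Equiv.Perm (Fin (M + 1)),
          if k.insertNth i f = k.insertNth i g ∘ σ then (1 : ℂ) else 0)
        = ∑ p : Option (Fin M) × Equiv.Perm (Fin M),
            if k.insertNth i f = k.insertNth i g ∘ (Edec k).symm p then (1 : ℂ) else 0 := by
    intro i
    exact Fintype.sum_equiv (Edec k) _ _ (by simp)
  calc (∑ i : Fin d, ∑ σ : Equiv.Perm (Fin (M + 1)),
          if k.insertNth i f = k.insertNth i g ∘ σ then (1 : ℂ) else 0)
      = ∑ i : Fin d, ∑ p : Option (Fin M) × Equiv.Perm (Fin M),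
          if k.insertNth i f = k.insertNth i g ∘ (Edec k).symm p then (1 : ℂ) else 0 := by
        exact Finset.sum_congr rfl fun i _ => step1 i
    _ = ∑ i : Fin d, ((∑ τ : Equiv.Perm (Fin M), if f = g ∘ τ then (1 : ℂ) else 0)
          + ∑ a : Fin M, ∑ τ : Equiv.Perm (Fin M),
              if i = g a ∧ f = g ∘ τ then (1 : ℂ) else 0) := by
        refine Finset.sum_congr rfl fun i _ => ?_
        rw [Fintype.sum_prod_type]
        rw [Fintype.sum_option]
        congr 1
        · exact Finset.sum_congr rfl fun τ _ => if_congr (cond_none k i f g τ) rfl rfl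
        · exact Finset.sum_congr rfl fun a _ => Finset.sum_congr rfl fun τ _ =>
            if_congr (cond_some k i f g a τ) rfl rfl
    _ = ((M + d : ℕ) : ℂ) * ∑ τ : Equiv.Perm (Fin M), if f = g ∘ τ then (1 : ℂ) else 0 := by
        rw [Finset.sum_add_distrib, Finset.sum_const]
        have h2 : (∑ i : Fin d, ∑ a : Fin M, ∑ τ : Equiv.Perm (Fin M),
            if i = g a ∧ f = g ∘ τ then (1 : ℂ) else 0)
            = (M : ℂ) * ∑ τ : Equiv.Perm (Fin M), if f = g ∘ τ then (1 : ℂ) else 0 := by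
          rw [Finset.sum_comm]
          have : ∀ a : Fin M, (∑ i : Fin d, ∑ τ : Equiv.Perm (Fin M),
              if i = g a ∧ f = g ∘ τ then (1 : ℂ) else 0)
              = ∑ τ : Equiv.Perm (Fin M), if f = g ∘ τ then (1 : ℂ) else 0 := by
            intro a
            rw [Finset.sum_comm]
            refine Finset.sum_congr rfl fun τ _ => ?_
            simp [ite_and]
          rw [Finset.sum_congr rfl fun a _ => this a, Finset.sum_const]
          simp [mul_comm]
        rw [h2, Finset.card_univ, Fintype.card_fin]
        push_cast
        ring

end aux

/-- Tracing out any single tensor factor (the `k`-th) of `P_+^{M+1}` gives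
`(d_{M+1}^+/d_M^+) · P_+^M = ((M+d)/(M+1)) · P_+^M`.  (This is the statement
`Tr_1[P_+^M] = ((M+d-1)/M) · P_+^{M-1}` with `M` replaced by `M+1`.) -/
theorem partialTrace_symProj (d M : ℕ) (k : Fin (M + 1)) :
    (Matrix.of fun f g : Fin M → Fin d =>
        ∑ i : Fin d, symProj d (M + 1) (k.insertNth i f) (k.insertNth i g))
      = (((M + d : ℕ) : ℂ) / ((M + 1 : ℕ) : ℂ)) • symProj d M := by
  ext f g
  simp only [Matrix.of_apply, Matrix.smul_apply, symProj, smul_eq_mul]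
  rw [← Finset.sum_div, key_sum k f g]
  have hM : ((M + 1 : ℕ) : ℂ) ≠ 0 := Nat.cast_ne_zero.mpr (Nat.succ_ne_zero M)
  have hF : ((Nat.factorial M : ℂ)) ≠ 0 := Nat.cast_ne_zero.mpr (Nat.factorial_ne_zero M)
  rw [Nat.factorial_succ]
  push_cast
  field_simp
end

section
/- If {(c_r, φ_r)}_{r=1}^R is an (M+1)-copy CSS in ℂ^d, then for every density matrix ρ supported on Sym^M(ℂ^d), the measure-and-prepare map yields single-copy output Tr_{M-1}[Σ_r d_M^+ c_r Tr(|φ_r⟩⟨φ_r|^{⊗M} ρ) · |φ_r⟩⟨φ_r|^{⊗M}] = (M/(M+d)) ρ^{(1)} + (1/(M+d)) I_d, where ρ^{(1)} = Tr_{M-1}[ρ]. -/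
open scoped BigOperators

open scoped ComplexOrder

/-!
Tracing out all but one copy of `|φ_r⟩⟨φ_r|^{⊗(M+1)}` leaves `|φ_r⟩⟨φ_r|`, so the single-copy
output is `d_{M+1}^+ Tr_{2..M+2}[(Σ_r c_r |φ_r⟩⟨φ_r|^{⊗(M+2)}) (1 ⊗ ρ)]`, and the CSS property
turns the operator in brackets into `P_+^{M+2} / d_{M+2}^+`. Writing `P_+^{M+2}` as the average of
the permutation operators `V_σ`, the permutation invariance of `ρ` gives
`Tr_{2..M+2}[V_σ (1 ⊗ ρ)] = tr ρ · 1` for the `(M+1)!` permutations fixing the first factor and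
`= ρ^{(1)}` for the other `(M+1) (M+1)!`. The constant comes from
`(M+1+d) d_{M+1}^+ = (M+2) d_{M+2}^+`.
-/

open Equiv Function

section FinCons

variable {α β : Type*} {n : ℕ}

lemma sum_fun_fin_succ [Fintype α] [AddCommMonoid β] (F : (Fin (n + 1) → α) → β) :
    ∑ w, F w = ∑ x, ∑ h : Fin n → α, F (Fin.cons x h) := by
  rw [← Equiv.sum_comp (Fin.consEquiv fun _ => α) F, Fintype.sum_prod_type]
  rfl

lemma sum_ite_cons_eq [Fintype α] [DecidableEq α] [AddCommMonoid β] (a : α) (X : Fin (n + 1) → α)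
    (G : (Fin n → α) → β) :
    ∑ f, (if Fin.cons a f = X then G f else 0) = if X 0 = a then G (Fin.tail X) else 0 := by
  split_ifs with hX
  · rw [← Fin.cons_self_tail X, hX]
    simp [Fin.cons_inj]
  · exact Finset.sum_eq_zero fun f _ => if_neg fun h => hX (by rw [← h, Fin.cons_zero])

lemma cons_comp_decomposeFin_symm_zero (b : α) (g : Fin (n + 1) → α) (e : Perm (Fin (n + 1))) :
    Fin.cons b g ∘ Perm.decomposeFin.symm (0, e) = Fin.cons b (g ∘ e) := by
  ext i
  cases i using Fin.cases <;> simp [Perm.decomposeFin_symm_apply_succ]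

lemma cons_comp_decomposeFin_symm_succ [DecidableEq α] (b : α) (g : Fin (n + 1) → α)
    (q : Fin (n + 1)) (e : Perm (Fin (n + 1))) :
    Fin.cons b g ∘ Perm.decomposeFin.symm (q.succ, e) = Fin.cons (g q) (update g q b ∘ e) := by
  ext i
  cases i using Fin.cases with
  | zero => simp
  | succ i =>
    simp only [comp_apply, Perm.decomposeFin_symm_apply_succ, Fin.cons_succ]
    by_cases he : e i = q
    · simp [he]
    · rw [swap_apply_of_ne_of_ne (Fin.succ_ne_zero _) (by simpa using he), Fin.cons_succ,
        update_of_ne he]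

end FinCons

section PartialTrace

variable {R α : Type*} [CommSemiring R] [Fintype α] {n : ℕ}

def partialTraceTail :
    Matrix (Fin (n + 1) → α) (Fin (n + 1) → α) R →ₗ[R] Matrix α α R where
  toFun A := Matrix.of fun a b => ∑ h : Fin n → α, A (Fin.cons a h) (Fin.cons b h)
  map_add' A B := by ext; simp [Finset.sum_add_distrib]
  map_smul' c A := by ext; simp [Finset.mul_sum]

lemma partialTraceTail_apply (A : Matrix (Fin (n + 1) → α) (Fin (n + 1) → α) R) (a b : α) :
    partialTraceTail A a b = ∑ h : Fin n → α, A (Fin.cons a h) (Fin.cons b h) := rfl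

end PartialTrace

section TensorPower

variable {d n : ℕ}

lemma vecPow_cons (φ : Fin d → ℂ) (x : Fin d) (f : Fin n → Fin d) :
    vecPow (n + 1) φ (Fin.cons x f) = φ x * vecPow n φ f := by
  simp [vecPow, Fin.prod_univ_succ]

lemma sum_vecPow_mul_star (φ : Fin d → ℂ) :
    ∑ f, vecPow n φ f * star (vecPow n φ f) = (∑ j, φ j * star (φ j)) ^ n := by
  simp only [vecPow, star_prod, ← Finset.prod_mul_distrib, Fintype.sum_pow]

lemma partialTraceTail_projOp_vecPow {φ : Fin d → ℂ} (hφ : ∑ j, φ j * star (φ j) = 1) :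
    partialTraceTail (projOp (vecPow (n + 1) φ)) = projOp φ := by
  ext a b
  simp only [partialTraceTail_apply, projOp, Matrix.of_apply, vecPow_cons, star_mul']
  simp_rw [mul_mul_mul_comm _ (vecPow n φ _), ← Finset.mul_sum, sum_vecPow_mul_star, hφ,
    one_pow, mul_one]

lemma trace_projOp_vecPow_mul_mul_projOp_apply (φ : Fin d → ℂ)
    (ρ : Matrix (Fin n → Fin d) (Fin n → Fin d) ℂ) (a b : Fin d) :
    (projOp (vecPow n φ) * ρ).trace * projOp φ a b
      = ∑ f, ∑ g, projOp (vecPow (n + 1) φ) (Fin.cons a f) (Fin.cons b g) * ρ g f := by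
  simp only [Matrix.trace, Matrix.diag, Matrix.mul_apply, projOp, Matrix.of_apply, vecPow_cons,
    star_mul', Finset.sum_mul]
  refine Finset.sum_congr rfl fun f _ => Finset.sum_congr rfl fun g _ => ?_
  ring

lemma sum_smul_trace_projOp_vecPow_mul_smul_projOp {ι : Type*} [Fintype ι] (φ : ι → Fin d → ℂ)
    (c : ι → ℂ) (s : ℂ) (P : Matrix (Fin (n + 1) → Fin d) (Fin (n + 1) → Fin d) ℂ)
    (hP : ∑ r, c r • projOp (vecPow (n + 1) (φ r)) = s • P)
    (ρ : Matrix (Fin n → Fin d) (Fin n → Fin d) ℂ) :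
    ∑ r, c r • ((projOp (vecPow n (φ r)) * ρ).trace • projOp (φ r))
      = s • Matrix.of fun a b => ∑ f, ∑ g, P (Fin.cons a f) (Fin.cons b g) * ρ g f := by
  have hP_apply : ∀ u v, ∑ r, c r * projOp (vecPow (n + 1) (φ r)) u v = s * P u v := fun u v => by
    simpa [Matrix.sum_apply] using congrFun (congrFun hP u) v
  ext a b
  simp only [Matrix.sum_apply, Matrix.smul_apply, trace_projOp_vecPow_mul_mul_projOp_apply,
    Matrix.of_apply, smul_eq_mul, Finset.mul_sum, ← mul_assoc, ← hP_apply, Finset.sum_mul]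
  exact Finset.sum_comm.trans (Finset.sum_congr rfl fun _ _ => Finset.sum_comm)

end TensorPower

section SymmetricSubspace

variable {d K : ℕ}

lemma symProj_apply_comp_perm_left (τ : Perm (Fin K)) (u v : Fin K → Fin d) :
    symProj d K (u ∘ τ) v = symProj d K u v := by
  simp only [symProj, Matrix.of_apply]
  congr 1
  refine Fintype.sum_equiv (Equiv.mulRight τ⁻¹) _ _ fun σ => if_congr ?_ rfl rfl
  rw [Equiv.coe_mulRight, Perm.coe_mul, Perm.inv_def, ← Function.comp_assoc, eq_comp_symm]

lemma symProj_apply_comp_perm_right (τ : Perm (Fin K)) (u v : Fin K → Fin d) :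
    symProj d K u (v ∘ τ) = symProj d K u v := by
  simp only [symProj, Matrix.of_apply]
  congr 1
  refine Fintype.sum_equiv (Equiv.mulLeft τ) _ _ fun σ => if_congr ?_ rfl rfl
  rw [Equiv.coe_mulLeft, Perm.coe_mul, Function.comp_assoc]

variable {ρ : Matrix (Fin K → Fin d) (Fin K → Fin d) ℂ}

lemma apply_comp_perm_left_of_symProj_mul_mul (hρ : symProj d K * ρ * symProj d K = ρ)
    (τ : Perm (Fin K)) (u v : Fin K → Fin d) : ρ (u ∘ τ) v = ρ u v := by
  rw [← hρ, mul_assoc]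
  simp only [Matrix.mul_apply, symProj_apply_comp_perm_left]

lemma apply_comp_perm_right_of_symProj_mul_mul (hρ : symProj d K * ρ * symProj d K = ρ)
    (τ : Perm (Fin K)) (u v : Fin K → Fin d) : ρ u (v ∘ τ) = ρ u v := by
  rw [← hρ]
  simp only [Matrix.mul_apply, symProj_apply_comp_perm_right]

end SymmetricSubspace

section PermutationPartialTrace

variable {d n : ℕ}

/-- The partial trace over all factors but the first of `V_σ (1 ⊗ ρ)`, where `V_σ` permutes
the `n + 2` tensor factors. -/
def permPartialTrace (σ : Perm (Fin (n + 2)))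
    (ρ : Matrix (Fin (n + 1) → Fin d) (Fin (n + 1) → Fin d) ℂ) : Matrix (Fin d) (Fin d) ℂ :=
  Matrix.of fun a b => ∑ f, ∑ g, if Fin.cons a f = Fin.cons b g ∘ σ then ρ g f else 0

variable {ρ : Matrix (Fin (n + 1) → Fin d) (Fin (n + 1) → Fin d) ℂ}

lemma sum_ite_apply_update_eq (hρ : symProj d (n + 1) * ρ * symProj d (n + 1) = ρ)
    (q : Fin (n + 1)) (a b : Fin d) :
    ∑ g, (if g q = a then ρ g (update g q b) else 0) = ∑ h, ρ (Fin.cons a h) (Fin.cons b h) := by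
  let s : Perm (Fin (n + 1)) := swap 0 q
  have hterm : ∀ w : Fin (n + 1) → Fin d,
      (if (w ∘ s) q = a then ρ (w ∘ s) (update (w ∘ s) q b) else 0)
        = if w 0 = a then ρ w (update w 0 b) else 0 := by
    intro w
    have hupd : update (w ∘ s) q b = update w 0 b ∘ s := by
      rw [update_comp_equiv, symm_swap, swap_apply_left]
    rw [hupd, apply_comp_perm_left_of_symProj_mul_mul hρ,
      apply_comp_perm_right_of_symProj_mul_mul hρ, comp_apply, swap_apply_right]
  have hs : Involutive fun w : Fin (n + 1) → Fin d => w ∘ s := fun w => by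
    ext j; simp [s, swap_apply_self]
  rw [← Fintype.sum_bijective _ hs.bijective _ _ fun w => (hterm w).symm, sum_fun_fin_succ,
    Finset.sum_comm]
  simp [Fin.update_cons_zero]

lemma permPartialTrace_decomposeFin_symm_zero
    (hρ : symProj d (n + 1) * ρ * symProj d (n + 1) = ρ) (e : Perm (Fin (n + 1))) :
    permPartialTrace (Perm.decomposeFin.symm (0, e)) ρ = ρ.trace • 1 := by
  ext a b
  rw [permPartialTrace, Matrix.of_apply, Finset.sum_comm]
  simp only [cons_comp_decomposeFin_symm_zero, sum_ite_cons_eq, Fin.cons_zero, Fin.tail_cons,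
    apply_comp_perm_right_of_symProj_mul_mul hρ]
  by_cases hab : a = b
  · simp [hab, Matrix.trace]
  · simp [hab, Ne.symm hab]

lemma permPartialTrace_decomposeFin_symm_succ
    (hρ : symProj d (n + 1) * ρ * symProj d (n + 1) = ρ) (q : Fin (n + 1))
    (e : Perm (Fin (n + 1))) :
    permPartialTrace (Perm.decomposeFin.symm (q.succ, e)) ρ = partialTraceTail ρ := by
  ext a b
  rw [permPartialTrace, Matrix.of_apply, Finset.sum_comm]
  simp only [cons_comp_decomposeFin_symm_succ, sum_ite_cons_eq, Fin.cons_zero, Fin.tail_cons,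
    apply_comp_perm_right_of_symProj_mul_mul hρ]
  exact sum_ite_apply_update_eq hρ q a b

lemma sum_permPartialTrace (hρ : symProj d (n + 1) * ρ * symProj d (n + 1) = ρ) :
    ∑ σ, permPartialTrace σ ρ
      = (n + 1).factorial • (ρ.trace • 1 + (n + 1) • partialTraceTail ρ) := by
  rw [← Perm.decomposeFin.symm.sum_comp, Fintype.sum_prod_type, Fin.sum_univ_succ]
  simp only [permPartialTrace_decomposeFin_symm_zero hρ,
    permPartialTrace_decomposeFin_symm_succ hρ, Finset.sum_const, Finset.card_univ,
    Fintype.card_perm, Fintype.card_fin, smul_add, smul_comm (n + 1)]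

lemma partialTrace_symProj_mul_one_kron (hρ : symProj d (n + 1) * ρ * symProj d (n + 1) = ρ) :
    Matrix.of (fun a b => ∑ f, ∑ g, symProj d (n + 2) (Fin.cons a f) (Fin.cons b g) * ρ g f)
      = ((n + 2 : ℕ) : ℂ)⁻¹ • (ρ.trace • 1 + (n + 1) • partialTraceTail ρ) := by
  have hsum :
      Matrix.of (fun a b => ∑ f, ∑ g, symProj d (n + 2) (Fin.cons a f) (Fin.cons b g) * ρ g f)
        = ((n + 2).factorial : ℂ)⁻¹ • ∑ σ, permPartialTrace σ ρ := by
    ext a b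
    simp only [symProj, permPartialTrace, Matrix.of_apply, Matrix.smul_apply, Matrix.sum_apply,
      div_eq_inv_mul, mul_assoc, Finset.sum_mul, Finset.mul_sum, boole_mul, smul_eq_mul]
    exact (Finset.sum_congr rfl fun _ _ => Finset.sum_comm).trans Finset.sum_comm
  rw [hsum, sum_permPartialTrace hρ, Nat.factorial_succ, ← Nat.cast_smul_eq_nsmul ℂ, smul_smul]
  congr 1
  have hfact : ((n + 1).factorial : ℂ) ≠ 0 := by exact_mod_cast (n + 1).factorial_ne_zero
  push_cast
  field_simp
  ring

end PermutationPartialTrace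

lemma add_mul_dPlus (d K : ℕ) : (K + d) * dPlus d K = (K + 1) * dPlus d (K + 1) := by
  rcases d with _ | e
  · rcases K with _ | K <;> simp [dPlus]
  · simp only [dPlus, show K + (e + 1) - 1 = K + e by omega,
      show K + 1 + (e + 1) - 1 = K + e + 1 by omega]
    rw [show K + (e + 1) = K + e + 1 by omega, Nat.add_one_mul_choose_eq, mul_comm]

lemma dPlus_mul_inv_dPlus_succ_mul_inv {d : ℕ} (hd : 0 < d) (K : ℕ) :
    (dPlus d K : ℂ) * (dPlus d (K + 1) : ℂ)⁻¹ * ((K + 1 : ℕ) : ℂ)⁻¹ = ((K + d : ℕ) : ℂ)⁻¹ := by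
  have hdim : ((K + d : ℕ) : ℂ) * dPlus d K = ((K + 1 : ℕ) : ℂ) * dPlus d (K + 1) := by
    exact_mod_cast add_mul_dPlus d K
  have hdPlus : (dPlus d (K + 1) : ℂ) ≠ 0 := by exact_mod_cast (Nat.choose_pos (by omega)).ne'
  have hKd : ((K + d : ℕ) : ℂ) ≠ 0 := by exact_mod_cast (by omega : K + d ≠ 0)
  have hK : ((K + 1 : ℕ) : ℂ) ≠ 0 := by exact_mod_cast K.succ_ne_zero
  field_simp
  linear_combination hdim

theorem css_measure_prepare_single_copy_general (d M R : ℕ)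
    (φ : Fin R → Fin d → ℂ) (c : Fin R → ℝ)
    (hunit : ∀ r, ∑ j, φ r j * star (φ r j) = 1)
    (hCSS : ∑ r, (c r : ℂ) • projOp (vecPow (M + 2) (φ r))
      = ((dPlus d (M + 2) : ℂ))⁻¹ • symProj d (M + 2))
    (ρ : Matrix (Fin (M + 1) → Fin d) (Fin (M + 1) → Fin d) ℂ)
    (hρtr : ρ.trace = 1)
    (hρsym : symProj d (M + 1) * ρ * symProj d (M + 1) = ρ) :
    (Matrix.of fun a b : Fin d =>
        ∑ h : Fin M → Fin d,
          (∑ r, ((dPlus d (M + 1) : ℂ) * (c r : ℂ) *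
              Matrix.trace (projOp (vecPow (M + 1) (φ r)) * ρ)) •
            projOp (vecPow (M + 1) (φ r)))
          (Fin.cons a h) (Fin.cons b h))
      = (((M + 1 : ℕ) : ℂ) / ((M + 1 + d : ℕ) : ℂ)) •
          (Matrix.of fun a b : Fin d => ∑ h : Fin M → Fin d, ρ (Fin.cons a h) (Fin.cons b h))
        + (((M + 1 + d : ℕ) : ℂ))⁻¹ • (1 : Matrix (Fin d) (Fin d) ℂ) := by
  rcases Nat.eq_zero_or_pos d with rfl | hd
  · ext a
    exact a.elim0
  have hmeasure :=
    sum_smul_trace_projOp_vecPow_mul_smul_projOp φ (fun r => (c r : ℂ)) _ _ hCSS ρ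
  rw [partialTrace_symProj_mul_one_kron hρsym, hρtr] at hmeasure
  change partialTraceTail _ = _ • partialTraceTail ρ + _
  simp only [map_sum, map_smul, partialTraceTail_projOp_vecPow (hunit _), mul_assoc, mul_smul,
    ← Finset.smul_sum, hmeasure]
  rw [smul_smul, smul_smul, dPlus_mul_inv_dPlus_succ_mul_inv hd (M + 1)]
  module

/-- Single-copy output of the measure-and-prepare scheme built from an
`(M+2)`-copy CSS acting on a density matrix `ρ` supported on `Sym^{M+1}(ℂ^d)`:
`Tr_{M}[Σ_r d_{M+1}^+ c_r Tr(|φ_r⟩⟨φ_r|^{⊗(M+1)} ρ) |φ_r⟩⟨φ_r|^{⊗(M+1)}]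
  = ((M+1)/(M+1+d)) ρ^{(1)} + (1/(M+1+d)) I_d`.
(The paper's statement with input copy number `M ≥ 1`, written with `M+1`.) -/
theorem css_measure_prepare_single_copy (d M R : ℕ)
    (φ : Fin R → Fin d → ℂ) (c : Fin R → ℝ)
    (hunit : ∀ r, ∑ j, φ r j * star (φ r j) = 1)
    (hc : ∀ r, 0 ≤ c r)
    (hCSS : ∑ r, (c r : ℂ) • projOp (vecPow (M + 2) (φ r))
      = ((dPlus d (M + 2) : ℂ))⁻¹ • symProj d (M + 2))
    (ρ : Matrix (Fin (M + 1) → Fin d) (Fin (M + 1) → Fin d) ℂ)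
    (hρpos : ρ.PosSemidef) (hρtr : ρ.trace = 1)
    (hρsym : symProj d (M + 1) * ρ * symProj d (M + 1) = ρ) :
    (Matrix.of fun a b : Fin d =>
        ∑ h : Fin M → Fin d,
          (∑ r, ((dPlus d (M + 1) : ℂ) * (c r : ℂ) *
              Matrix.trace (projOp (vecPow (M + 1) (φ r)) * ρ)) •
            projOp (vecPow (M + 1) (φ r)))
          (Fin.cons a h) (Fin.cons b h))
      = (((M + 1 : ℕ) : ℂ) / ((M + 1 + d : ℕ) : ℂ)) •
          (Matrix.of fun a b : Fin d => ∑ h : Fin M → Fin d, ρ (Fin.cons a h) (Fin.cons b h))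
        + (((M + 1 + d : ℕ) : ℂ))⁻¹ • (1 : Matrix (Fin d) (Fin d) ℂ) :=
  css_measure_prepare_single_copy_general d M R φ c hunit hCSS ρ hρtr hρsym
end

section
/- For d an odd prime, the d(d+1) states of a complete set of d+1 mutually unbiased bases in ℂ^d, each with probability 1/(d(d+1)), form a 2-copy CSS: (1/(d(d+1))) Σ_{k=0}^{d} Σ_{t=0}^{d-1} (|ψ_t^k⟩⟨ψ_t^k|)^{⊗2} = P_+^2 / (d(d+1)/2). -/
open scoped BigOperators

/-- `s_j = j + (j+1) + ⋯ + (d-1)`. -/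
def sIdx (d j : ℕ) : ℕ := ∑ i ∈ Finset.Ico j d, i

/-- The complete set of `d+1` mutually unbiased bases in `ℂ^d` (`d` an odd
prime): `|ψ_t^0⟩ = |t⟩` and, for `k ≥ 1`,
`|ψ_t^k⟩ = (1/√d) Σ_j ω^{t(d-j)} ω^{-k s_j} |j⟩` with `ω = e^{2πi/d}`. -/
noncomputable def mub (d : ℕ) (k : Fin (d + 1)) (t : Fin d) : Fin d → ℂ :=
  fun j =>
    if k.val = 0 then (if j = t then 1 else 0)
    else (((Real.sqrt d)⁻¹ : ℝ) : ℂ) *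
      Complex.exp (2 * Real.pi * Complex.I * ((t.val * (d - j.val) : ℕ) : ℂ) / d) *
      Complex.exp (-(2 * Real.pi * Complex.I * ((k.val * sIdx d j.val : ℕ) : ℂ) / d))

/-!
The computational basis contributes `[a = b = c = e]` to the fourth moment
`∑ ψ(a) ψ(b) conj (ψ(c) ψ(e))` of the MUB vectors. For `k ≥ 1` the entries are
`d^{-1/2} ω^{-(t j + k s_j)}`, so summing over `t` and `k` by orthogonality of the characters of
`ZMod d` leaves `[a + b ≡ c + e ∧ s_a + s_b ≡ s_c + s_e]`. Since `2 s_j ≡ j - j²`, for odd `d` the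
two congruences fix the sum and the sum of squares of `{a, b}`, hence the pair itself. By
inclusion–exclusion the fourth moment is `δ_ac δ_be + δ_ae δ_bc`, which is `2 P_+` entrywise.
-/

open Finset

lemma projOp_vecPow_two_apply {d : ℕ} (v : Fin d → ℂ) (f g : Fin 2 → Fin d) :
    projOp (vecPow 2 v) f g = v (f 0) * v (f 1) * star (v (g 0) * v (g 1)) := by
  simp [projOp, vecPow, Fin.prod_univ_two]

lemma symProj_two_apply (d : ℕ) (f g : Fin 2 → Fin d) :
    symProj d 2 f g =
      ((if f 0 = g 0 ∧ f 1 = g 1 then 1 else 0) + (if f 0 = g 1 ∧ f 1 = g 0 then 1 else 0)) / 2 := by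
  have huniv : (univ : Finset (Equiv.Perm (Fin 2))) = {1, Equiv.swap 0 1} := by decide
  rw [symProj, Matrix.of_apply, huniv, sum_pair (by decide)]
  simp [funext_iff, Fin.forall_fin_two]

lemma sum_projOp_vecPow_two_of_fourth_moment {ι : Type*} [Fintype ι] {d : ℕ}
    (v : ι → Fin d → ℂ)
    (hv : ∀ a b c e, ∑ i, v i a * v i b * star (v i c * v i e) =
      (if a = c ∧ b = e then 1 else 0) + (if a = e ∧ b = c then 1 else 0)) :
    ∑ i, projOp (vecPow 2 (v i)) = (2 : ℂ) • symProj d 2 := by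
  ext f g
  rw [Matrix.sum_apply, Matrix.smul_apply, symProj_two_apply]
  simp only [projOp_vecPow_two_apply, hv, smul_eq_mul]
  ring

lemma two_mul_sum_range_cast {R : Type*} [CommRing R] (n : ℕ) :
    2 * ∑ i ∈ range n, (i : R) = n ^ 2 - n := by
  induction n with
  | zero => simp
  | succ n ih => rw [sum_range_succ, mul_add, ih]; push_cast; ring

lemma two_mul_sIdx_cast {d j : ℕ} (hj : j ≤ d) : 2 * (sIdx d j : ZMod d) = j - j ^ 2 := by
  rw [sIdx, Nat.cast_sum, sum_Ico_eq_sub _ hj, mul_sub, two_mul_sum_range_cast,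
    two_mul_sum_range_cast, ZMod.natCast_self]
  ring

lemma eq_and_eq_or_eq_and_eq_of_add_eq_of_sq_add_sq_eq {R : Type*} [CommRing R] [IsDomain R]
    (h2 : (2 : R) ≠ 0) {a b c e : R} (hs : a + b = c + e) (hq : a ^ 2 + b ^ 2 = c ^ 2 + e ^ 2) :
    (a = c ∧ b = e) ∨ (a = e ∧ b = c) := by
  have hprod : a * b = c * e :=
    mul_left_cancel₀ h2 (by linear_combination (a + b + c + e) * hs - hq)
  have hz : (a - c) * (a - e) = 0 := by linear_combination a * hs - hprod
  rcases mul_eq_zero.mp hz with h | h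
  · exact Or.inl ⟨by linear_combination h, by linear_combination hs - h⟩
  · exact Or.inr ⟨by linear_combination h, by linear_combination hs - h⟩

lemma inv_sqrt_pow_four {x : ℝ} (hx : 0 ≤ x) : (Real.sqrt x)⁻¹ ^ 4 = (x ^ 2)⁻¹ := by
  rw [inv_pow, show 4 = 2 * 2 from rfl, pow_mul, Real.sq_sqrt hx]

lemma Fin.natCast_zmod_injective (d : ℕ) : Function.Injective (fun t : Fin d => (t : ZMod d)) :=
  fun x y h => Fin.ext <| by simpa [ZMod.natCast_eq_natCast_iff', Nat.mod_eq_of_lt] using h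

lemma sum_mub_zero_fourth_product {d : ℕ} (a b c e : Fin d) :
    ∑ t, mub d 0 t a * mub d 0 t b * star (mub d 0 t c * mub d 0 t e) =
      if a = b ∧ a = c ∧ a = e then 1 else 0 := by
  have hterm : ∀ t, mub d 0 t a * mub d 0 t b * star (mub d 0 t c * mub d 0 t e) =
      if a = t then (if a = b ∧ a = c ∧ a = e then 1 else 0) else 0 := by
    intro t
    simp only [mub, Fin.val_zero, if_true, star_mul', apply_ite star, star_one, star_zero]
    split_ifs <;> grind
  simp only [hterm, sum_ite_eq, mem_univ, if_true]

section StdAddChar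

open ZMod

variable {d : ℕ} [NeZero d]

lemma mub_succ_apply (k t j : Fin d) :
    mub d k.succ t j = (((Real.sqrt d)⁻¹ : ℝ) : ℂ) *
      stdAddChar (-((t : ZMod d) * (j : ZMod d) + ((k : ZMod d) + 1) * (sIdx d j : ZMod d))) := by
  have harg : -((t : ZMod d) * (j : ZMod d) + ((k : ZMod d) + 1) * (sIdx d j : ZMod d)) =
      (((t * (d - j) : ℕ) : ℤ) : ZMod d) + ((-((k.succ * sIdx d j : ℕ) : ℤ) : ℤ) : ZMod d) := by
    push_cast [Nat.cast_sub j.isLt.le, Fin.val_succ]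
    simp only [ZMod.natCast_self]
    ring
  rw [mub, if_neg (by simp), harg, AddChar.map_add_eq_mul, stdAddChar_coe, stdAddChar_coe,
    mul_assoc]
  push_cast
  ring_nf

lemma mub_succ_fourth_product (k t a b c e : Fin d) :
    mub d k.succ t a * mub d k.succ t b * star (mub d k.succ t c * mub d k.succ t e) =
      ((d : ℂ) ^ 2)⁻¹ * stdAddChar
        ((t : ZMod d) * ((c : ZMod d) + (e : ZMod d) - (a : ZMod d) - (b : ZMod d)) +
          ((k : ZMod d) + 1) * ((sIdx d c : ZMod d) + (sIdx d e : ZMod d) -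
            (sIdx d a : ZMod d) - (sIdx d b : ZMod d))) := by
  simp only [mub_succ_apply, star_mul', Complex.star_def, Complex.conj_ofReal,
    ← AddChar.map_neg_eq_conj]
  have hd : (((Real.sqrt d)⁻¹ : ℝ) : ℂ) ^ 4 = ((d : ℂ) ^ 2)⁻¹ := by
    rw [← Complex.ofReal_pow, inv_sqrt_pow_four d.cast_nonneg]; push_cast; rfl
  rw [← hd]
  simp only [mul_assoc, mul_left_comm _ (((Real.sqrt d)⁻¹ : ℝ) : ℂ), ← AddChar.map_add_eq_mul]
  ring_nf

lemma sum_fin_natCast_zmod {M : Type*} [AddCommMonoid M] (F : ZMod d → M) :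
    ∑ t : Fin d, F t = ∑ x : ZMod d, F x :=
  Fintype.sum_bijective _ ((Fintype.bijective_iff_injective_and_card _).2
    ⟨Fin.natCast_zmod_injective d, by simp⟩) _ _ fun _ => rfl

lemma sum_sum_stdAddChar_mul_add_succ_mul (m n : ZMod d) :
    ∑ k : Fin d, ∑ t : Fin d, stdAddChar ((t : ZMod d) * m + ((k : ZMod d) + 1) * n) =
      if m = 0 ∧ n = 0 then (d : ℂ) ^ 2 else 0 := by
  have hψ := isPrimitive_stdAddChar d
  have hshift : ∑ x : ZMod d, stdAddChar ((x + 1) * n) = ∑ x : ZMod d, stdAddChar (x * n) :=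
    Fintype.sum_equiv (Equiv.addRight 1) _ _ fun _ => rfl
  simp only [AddChar.map_add_eq_mul, ← mul_sum, ← sum_mul]
  rw [sum_fin_natCast_zmod (fun x => stdAddChar ((x + 1) * n)), hshift,
    sum_fin_natCast_zmod (fun x => stdAddChar (x * m)),
    AddChar.sum_mulShift _ hψ, AddChar.sum_mulShift _ hψ, ZMod.card]
  split_ifs <;> simp_all [sq]

end StdAddChar

lemma mub_phases_eq_zero_iff {d : ℕ} [Fact d.Prime] (h2 : (2 : ZMod d) ≠ 0) (a b c e : Fin d) :
    ((c : ZMod d) + (e : ZMod d) - (a : ZMod d) - (b : ZMod d) = 0 ∧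
      (sIdx d c : ZMod d) + (sIdx d e : ZMod d) - (sIdx d a : ZMod d) - (sIdx d b : ZMod d) = 0) ↔
      (a = c ∧ b = e) ∨ (a = e ∧ b = c) := by
  have hσ (j : Fin d) : 2 * (sIdx d j : ZMod d) = j - (j : ZMod d) ^ 2 :=
    two_mul_sIdx_cast j.isLt.le
  constructor
  · rintro ⟨hm, hn⟩
    have hs : (a : ZMod d) + b = c + e := by linear_combination -hm
    have hq : (a : ZMod d) ^ 2 + (b : ZMod d) ^ 2 = (c : ZMod d) ^ 2 + (e : ZMod d) ^ 2 := by
      linear_combination 2 * hn - hσ c - hσ e + hσ a + hσ b - hm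
    simpa only [(Fin.natCast_zmod_injective d).eq_iff] using
      eq_and_eq_or_eq_and_eq_of_add_eq_of_sq_add_sq_eq h2 hs hq
  · rintro (⟨rfl, rfl⟩ | ⟨rfl, rfl⟩) <;> constructor <;> ring

lemma mub_fourth_moment {d : ℕ} (hp : d.Prime) (hodd : Odd d) (a b c e : Fin d) :
    ∑ k : Fin (d + 1), ∑ t, mub d k t a * mub d k t b * star (mub d k t c * mub d k t e) =
      (if a = c ∧ b = e then 1 else 0) + (if a = e ∧ b = c then 1 else 0) := by
  have := Fact.mk hp
  have h2 : (2 : ZMod d) ≠ 0 := Ring.two_ne_zero <| by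
    rw [ZMod.ringChar_zmod_n]; rintro rfl; exact absurd hodd (by decide)
  have hd : (d : ℂ) ≠ 0 := Nat.cast_ne_zero.mpr hp.ne_zero
  rw [Fin.sum_univ_succ, sum_mub_zero_fourth_product]
  simp only [mub_succ_fourth_product, ← mul_sum, sum_sum_stdAddChar_mul_add_succ_mul,
    mub_phases_eq_zero_iff h2, mul_ite, mul_zero, inv_mul_cancel₀ (pow_ne_zero 2 hd)]
  split_ifs <;> grind

/-- For `d` an odd prime, the `d(d+1)` MUB states with uniform probability
`1/(d(d+1))` form a 2-copy CSS:
`(1/(d(d+1))) Σ_{k,t} (|ψ_t^k⟩⟨ψ_t^k|)^{⊗2} = P_+^2 / (d(d+1)/2)`. -/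
theorem mub_two_copy_css (d : ℕ) (hp : Nat.Prime d) (hodd : Odd d) :
    ((d * (d + 1) : ℕ) : ℂ)⁻¹ •
        ∑ k : Fin (d + 1), ∑ t : Fin d, projOp (vecPow 2 (mub d k t))
      = ((d : ℂ) * ((d : ℂ) + 1) / 2)⁻¹ • symProj d 2 := by
  have h2design : ∑ k : Fin (d + 1), ∑ t : Fin d, projOp (vecPow 2 (mub d k t)) =
      (2 : ℂ) • symProj d 2 := by
    rw [← Fintype.sum_prod_type' (fun k t => projOp (vecPow 2 (mub d k t)))]
    exact sum_projOp_vecPow_two_of_fourth_moment (fun p : Fin (d + 1) × Fin d => mub d p.1 p.2)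
      fun a b c e => by
        rw [Fintype.sum_prod_type'
            (fun k t => mub d k t a * mub d k t b * star (mub d k t c * mub d k t e)),
          mub_fourth_moment hp hodd]
  have hd : (d : ℂ) ≠ 0 := Nat.cast_ne_zero.mpr hp.ne_zero
  have hd1 : (d : ℂ) + 1 ≠ 0 := by exact_mod_cast d.succ_ne_zero
  rw [h2design, smul_smul]
  congr 1
  field_simp
  push_cast
  ring
end

section
/- Let P̂ be a Hermitian operator on Sym^{M+1}(ℂ^d). If Tr[(ρ ⊗ |l⟩⟨k|) P̂] = 0 for every density matrix ρ supported on Sym^M(ℂ^d) and all computational basis vectors |k⟩, |l⟩ of ℂ^d, then P̂ = 0. -/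
open scoped BigOperators

open scoped ComplexOrder

/-!
Testing the hypothesis on the product state `ρ = |χ^{⊗M}⟩⟨χ^{⊗M}| / ‖χ‖^{2M}` and summing against
`conj (χ k) * χ l` gives `⟨χ^{⊗N}| P̂ |χ^{⊗N}⟩ = 0` for every `χ ∈ ℂ^d`, where `N = M + 1`.
Then `t ↦ ⟨(φ + t ψ)^{⊗N}| P̂ |(φ + t ψ)^{⊗N}⟩` is a polynomial in `t` and `conj t` vanishing
identically, so all its coefficients vanish, among them that of `t^N`, which is
`⟨φ^{⊗N}| P̂ |ψ^{⊗N}⟩`. Finally, tensor powers span the symmetric subspace (a column of `P_+` is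
a signed sum of the `(∑ i, ε i e_{f i})^{⊗N}` over sign vectors `ε`), so `P̂ = P_+ P̂ P_+ = 0`.
-/

open Polynomial Finset Matrix
open scoped ComplexConjugate

lemma Complex.infinite_sphere_zero_one : (Metric.sphere (0 : ℂ) 1).Infinite :=
  (isConnected_sphere (by simp) 0 zero_le_one).isPreconnected.infinite_of_nontrivial
    ⟨1, by simp, -1, by simp, by norm_num⟩

lemma Polynomial.eq_zero_of_forall_eval_ofReal_eq_zero {p : ℂ[X]}
    (h : ∀ x : ℝ, p.eval (x : ℂ) = 0) : p = 0 :=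
  p.eq_zero_of_infinite_isRoot <|
    (Set.infinite_range_of_injective Complex.ofReal_injective).mono <| by
      rintro _ ⟨x, rfl⟩; exact h x

lemma Polynomial.eq_zero_of_forall_eval_sphere_eq_zero {p : ℂ[X]}
    (h : ∀ ω ∈ Metric.sphere (0 : ℂ) 1, p.eval ω = 0) : p = 0 :=
  p.eq_zero_of_infinite_isRoot <| Complex.infinite_sphere_zero_one.mono h

lemma eq_zero_of_forall_sum_conj_pow_mul_pow_eq_zero {N : ℕ} {c : ℕ → ℕ → ℂ}
    (h : ∀ t : ℂ, ∑ a ∈ range (N + 1), ∑ b ∈ range (N + 1), conj t ^ a * t ^ b * c a b = 0)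
    {a b : ℕ} (ha : a ≤ N) (hb : b ≤ N) : c a b = 0 := by
  have homogeneous : ∀ (ω : ℂ) (s : ℕ), ∑ a ∈ range (N + 1), ∑ b ∈ range (N + 1),
      (if s = a + b then conj ω ^ a * ω ^ b * c a b else 0) = 0 := by
    intro ω s
    -- on the line `t = x * ω` with `x` real, the total degree `a + b` is the degree in `x`
    let q : ℂ[X] := ∑ a ∈ range (N + 1), ∑ b ∈ range (N + 1),
      C (conj ω ^ a * ω ^ b * c a b) * X ^ (a + b)
    have hq : q = 0 := eq_zero_of_forall_eval_ofReal_eq_zero fun x => by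
      rw [← h (x * ω)]
      simp only [q, eval_finsetSum, eval_mul, eval_C, eval_pow, eval_X, map_mul,
        Complex.conj_ofReal]
      refine sum_congr rfl fun a _ => sum_congr rfl fun b _ => by ring
    simpa only [q, finsetSum_coeff, coeff_C_mul_X_pow, coeff_zero] using congrArg (coeff · s) hq
  -- on the unit circle `conj ω = ω⁻¹`, so `ω ^ (a + b)` times the part of degree `a + b` is `r ω`
  let r : ℂ[X] := ∑ a' ∈ range (N + 1), ∑ b' ∈ range (N + 1),
    if a + b = a' + b' then C (c a' b') * X ^ (2 * b') else 0
  have hr : r = 0 := eq_zero_of_forall_eval_sphere_eq_zero fun ω hω => by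
    have hconj : conj ω = ω⁻¹ := (Complex.inv_eq_conj (mem_sphere_zero_iff_norm.1 hω)).symm
    have hω0 : ω ≠ 0 := ne_zero_of_mem_unit_sphere ⟨ω, hω⟩
    rw [← mul_zero (ω ^ (a + b)), ← homogeneous ω (a + b), mul_sum]
    simp only [r, eval_finsetSum, mul_sum]
    refine sum_congr rfl fun a' _ => sum_congr rfl fun b' _ => ?_
    split_ifs with hs
    · have hcancel : ω ^ a' * ω⁻¹ ^ a' = 1 := by rw [← mul_pow, mul_inv_cancel₀ hω0, one_pow]
      simp only [hs, hconj, eval_mul, eval_C, eval_pow, eval_X]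
      linear_combination (-c a' b' * ω ^ (2 * b')) * hcancel
    · simp
  have hcoeff := congrArg (coeff · (2 * b)) hr
  have hindex : ∀ a' b', (a + b = a' + b' ∧ 2 * b = 2 * b') ↔ (a = a' ∧ b = b') := by omega
  simp only [r, finsetSum_coeff, apply_ite (coeff · (2 * b)), coeff_C_mul_X_pow, coeff_zero,
    ← ite_and, hindex] at hcoeff
  simp only [ite_and] at hcoeff
  simpa [Nat.lt_succ_of_le ha, Nat.lt_succ_of_le hb] using hcoeff

lemma sum_units_int_prod_mul_prod_comp {ι : Type*} [Fintype ι] [DecidableEq ι] (m : ι → ι) :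
    ∑ ε : ι → ℤˣ, (((∏ i, ε i) * ∏ j, ε (m j) : ℤˣ) : ℤ) =
      if m.Bijective then 2 ^ Fintype.card ι else 0 := by
  split_ifs with hm
  · have hcomp (ε : ι → ℤˣ) : ∏ j, ε (m j) = ∏ i, ε i :=
      Equiv.prod_comp (Equiv.ofBijective m hm) ε
    simp [hcomp, Int.units_mul_self, Fintype.card_units_int]
  -- flipping the sign at a point outside the range of `m` negates each summand
  obtain ⟨i₀, hi₀⟩ : ∃ i₀, ∀ j, m j ≠ i₀ := by
    simpa [Function.Surjective, Finite.injective_iff_surjective, Function.Bijective] using hm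
  let flip : Equiv.Perm (ι → ℤˣ) :=
    Function.Involutive.toPerm (fun ε => Function.update ε i₀ (-ε i₀)) fun ε => by simp
  have hflip (ε : ι → ℤˣ) : ((∏ i, flip ε i) * ∏ j, flip ε (m j) : ℤˣ) =
      -((∏ i, ε i) * ∏ j, ε (m j)) := by
    have hrange : ∏ j, flip ε (m j) = ∏ j, ε (m j) :=
      prod_congr rfl fun j _ => Function.update_of_ne (hi₀ j) _ _
    rw [hrange]
    change (∏ i, Function.update ε i₀ (-ε i₀) i) * _ = _
    rw [prod_update_of_mem (mem_univ i₀),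
      prod_eq_mul_prod_sdiff_singleton_of_mem (mem_univ i₀) ε, neg_mul, neg_mul]
  have := Equiv.sum_comp flip fun ε => (((∏ i, ε i) * ∏ j, ε (m j) : ℤˣ) : ℤ)
  simp only [hflip, Units.val_neg, sum_neg_distrib] at this
  exact CharZero.neg_eq_self_iff.1 this

lemma star_dotProduct_mulVec_eq_zero_of_mem_span {R n : Type*} [CommRing R] [StarRing R]
    [Fintype n] {P : Matrix n n R} {s : Set (n → R)} (h : ∀ u ∈ s, ∀ w ∈ s, star u ⬝ᵥ P *ᵥ w = 0)
    {u w : n → R} (hu : u ∈ Submodule.span R s) (hw : w ∈ Submodule.span R s) :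
    star u ⬝ᵥ P *ᵥ w = 0 := by
  induction hw using Submodule.span_induction with
  | mem w hw =>
    induction hu using Submodule.span_induction with
    | mem u hu => exact h u hu w hw
    | zero => simp
    | add u u' _ _ hu hu' => simp [add_dotProduct, hu, hu']
    | smul c u _ hu => simp [hu]
  | zero => simp
  | add w w' _ _ hw hw' => simp [mulVec_add, dotProduct_add, hw, hw']
  | smul c w _ hw => simp [mulVec_smul, hw]

section TensorPower

variable {d N : ℕ}

lemma star_vecPow (φ : Fin d → ℂ) : star (vecPow N φ) = vecPow N (star φ) := by
  ext x
  simp [vecPow]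

lemma vecPow_dotProduct_vecPow (φ ψ : Fin d → ℂ) :
    vecPow N φ ⬝ᵥ vecPow N ψ = (φ ⬝ᵥ ψ) ^ N := by
  simp only [dotProduct, vecPow, Fintype.sum_pow, prod_mul_distrib]

lemma vecPow_succ (φ : Fin d → ℂ) (x : Fin (N + 1) → Fin d) :
    vecPow (N + 1) φ x = vecPow N φ (fun i => x i.castSucc) * φ (x (Fin.last N)) :=
  Fin.prod_univ_castSucc _

lemma vecPow_comp_perm (φ : Fin d → ℂ) (x : Fin N → Fin d) (σ : Equiv.Perm (Fin N)) :
    vecPow N φ (x ∘ σ) = vecPow N φ x :=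
  Equiv.prod_comp σ fun i => φ (x i)

lemma symProj_isHermitian : (symProj d N).IsHermitian := by
  ext f g
  simp only [conjTranspose_apply, symProj, of_apply, star_div₀, star_sum, star_natCast,
    apply_ite star, star_one, star_zero]
  congr 1
  exact Fintype.sum_equiv (Equiv.inv _) _ _ fun σ => by
    simp only [Equiv.inv_apply, Equiv.Perm.inv_def, Equiv.eq_comp_symm, eq_comm]

lemma symProj_mulVec_vecPow (φ : Fin d → ℂ) : symProj d N *ᵥ vecPow N φ = vecPow N φ := by
  ext x
  have hfac : (N.factorial : ℂ) ≠ 0 := Nat.cast_ne_zero.2 N.factorial_ne_zero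
  simp only [mulVec, dotProduct, symProj, of_apply, div_mul_eq_mul_div, sum_mul, ite_mul,
    one_mul, zero_mul, ← sum_div]
  rw [sum_comm, div_eq_iff hfac]
  simp [← Equiv.comp_symm_eq, vecPow_comp_perm, Fintype.card_perm, mul_comm]

lemma exists_vecPow_add_smul_eq_sum (φ ψ : Fin d → ℂ) :
    ∃ v : ℕ → (Fin N → Fin d) → ℂ, v 0 = vecPow N φ ∧ v N = vecPow N ψ ∧
      ∀ t : ℂ, vecPow N (φ + t • ψ) = ∑ k ∈ range (N + 1), t ^ k • v k := by
  let p : (Fin N → Fin d) → ℂ[X] := fun x => ∏ i, (C (ψ (x i)) * X + C (φ (x i)))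
  have hdeg : ∀ x, (p x).natDegree < N + 1 := fun x =>
    Nat.lt_succ_of_le <| (natDegree_prod_le _ _).trans <| by
      simpa using sum_le_sum fun i (_ : i ∈ univ) =>
        natDegree_linear_le (a := ψ (x i)) (b := φ (x i))
  refine ⟨fun k x => (p x).coeff k, ?_, ?_, fun t => ?_⟩
  · ext x
    simp [p, coeff_zero_eq_eval_zero, eval_prod, vecPow]
  · ext x
    simpa [p, vecPow] using coeff_prod_of_natDegree_le (s := univ)
      (fun i => C (ψ (x i)) * X + C (φ (x i))) 1 fun i _ => natDegree_linear_le
  · ext x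
    have heval : vecPow N (φ + t • ψ) x = (p x).eval t := by
      simp only [p, eval_prod, eval_add, eval_mul, eval_C, eval_X, vecPow, Pi.add_apply,
        Pi.smul_apply, smul_eq_mul]
      exact prod_congr rfl fun i _ => by ring
    simp [heval, eval_eq_sum_range' (hdeg x), Finset.sum_apply, mul_comm]

lemma star_vecPow_dotProduct_mulVec_eq_zero {P : Matrix (Fin N → Fin d) (Fin N → Fin d) ℂ}
    (hP : ∀ χ, star (vecPow N χ) ⬝ᵥ P *ᵥ vecPow N χ = 0) (φ ψ : Fin d → ℂ) :
    star (vecPow N φ) ⬝ᵥ P *ᵥ vecPow N ψ = 0 := by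
  obtain ⟨v, hv0, hvN, hv⟩ := exists_vecPow_add_smul_eq_sum (N := N) φ ψ
  rw [← hv0, ← hvN]
  refine eq_zero_of_forall_sum_conj_pow_mul_pow_eq_zero (c := fun a b => star (v a) ⬝ᵥ P *ᵥ v b)
    (fun t => ?_) (Nat.zero_le N) le_rfl
  rw [← hP (φ + t • ψ), hv]
  simp only [star_sum, star_smul, star_pow, Complex.star_def, mulVec_sum, mulVec_smul,
    dotProduct_sum, dotProduct_smul, sum_dotProduct, smul_dotProduct, smul_eq_mul, mul_sum]
  rw [sum_comm]
  exact sum_congr rfl fun a _ => sum_congr rfl fun b _ => by ring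

lemma sum_units_int_smul_vecPow (f : Fin N → Fin d) :
    ∑ ε : Fin N → ℤˣ, (((∏ i, ε i : ℤˣ) : ℤ) : ℂ) •
        vecPow N (∑ i, (((ε i : ℤˣ) : ℤ) : ℂ) • Pi.single (f i) 1) =
      ((2 ^ N * N.factorial : ℕ) : ℂ) • fun x => symProj d N x f := by
  ext x
  have hterm (ε : Fin N → ℤˣ) (m : Fin N → Fin N) :
      ∏ j, ((((ε (m j) : ℤˣ) : ℤ) : ℂ) * (Pi.single (f (m j)) 1 : Fin d → ℂ) (x j)) =
        (((∏ j, ε (m j) : ℤˣ) : ℤ) : ℂ) * if x = f ∘ m then 1 else 0 := by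
    rw [prod_mul_distrib, Units.coe_prod, Int.cast_prod]
    simp only [Pi.single_apply, prod_boole, mem_univ, true_implies, funext_iff, Function.comp_apply]
  calc _ = ∑ m : Fin N → Fin N,
        ((∑ ε : Fin N → ℤˣ, (((∏ i, ε i) * ∏ j, ε (m j) : ℤˣ) : ℤ) : ℤ) : ℂ) *
          if x = f ∘ m then 1 else 0 := by
        simp only [Finset.sum_apply, Pi.smul_apply, smul_eq_mul, vecPow, Fintype.prod_sum, hterm,
          mul_sum]
        rw [sum_comm]
        push_cast
        simp only [mul_ite, mul_one, mul_zero, sum_ite_irrel, sum_const_zero]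
    _ = 2 ^ N * ∑ σ : Equiv.Perm (Fin N), if x = f ∘ σ then 1 else 0 := by
        simp only [sum_units_int_prod_mul_prod_comp, Fintype.card_fin, apply_ite (Int.cast : ℤ → ℂ),
          Int.cast_pow, Int.cast_ofNat, Int.cast_zero, ite_mul, zero_mul, mul_sum]
        rw [← sum_filter, sum_subtype _ (p := Function.Bijective) (by simp)]
        exact Fintype.sum_equiv (Equiv.bijectiveEquiv (α := Fin N) (β := Fin N)) _ _ fun m => rfl
    _ = _ := by
        have hfac : (N.factorial : ℂ) ≠ 0 := Nat.cast_ne_zero.2 N.factorial_ne_zero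
        simp only [Nat.cast_mul, Nat.cast_pow, Nat.cast_ofNat, Pi.smul_apply, smul_eq_mul, symProj,
          of_apply]
        rw [mul_assoc, mul_div_cancel₀ _ hfac]

lemma symProj_col_mem_span_range_vecPow (f : Fin N → Fin d) :
    (fun x => symProj d N x f) ∈ Submodule.span ℂ (Set.range (vecPow N)) := by
  have hc : ((2 ^ N * N.factorial : ℕ) : ℂ) ≠ 0 := by positivity
  rw [← inv_smul_smul₀ hc (fun x => symProj d N x f), ← sum_units_int_smul_vecPow]
  exact Submodule.smul_mem _ _ <| Submodule.sum_mem _ fun ε _ =>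
    Submodule.smul_mem _ _ <| Submodule.subset_span ⟨_, rfl⟩

lemma eq_zero_of_symProj_mul_mul_symProj_eq {P : Matrix (Fin N → Fin d) (Fin N → Fin d) ℂ}
    (hP : symProj d N * P * symProj d N = P)
    (h : ∀ φ ψ, star (vecPow N φ) ⬝ᵥ P *ᵥ vecPow N ψ = 0) : P = 0 := by
  have hspan : ∀ u ∈ Set.range (vecPow (d := d) N), ∀ w ∈ Set.range (vecPow N),
      star u ⬝ᵥ P *ᵥ w = 0 := by
    rintro _ ⟨φ, rfl⟩ _ ⟨ψ, rfl⟩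
    exact h φ ψ
  ext g f
  have hentry : (symProj d N * P * symProj d N) g f =
      star (fun x => symProj d N x g) ⬝ᵥ P *ᵥ fun x => symProj d N x f := by
    rw [Matrix.mul_assoc]
    simp only [Matrix.mul_apply, dotProduct, mulVec, Pi.star_apply, symProj_isHermitian.apply]
  rw [← hP, hentry, Matrix.zero_apply]
  exact star_dotProduct_mulVec_eq_zero_of_mem_span hspan
    (symProj_col_mem_span_range_vecPow g) (symProj_col_mem_span_range_vecPow f)

end TensorPower

/-- `ρ ⊗ |l⟩⟨k|`, with `ρ` acting on the first `M` tensor factors. -/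
def tensorKetBra {d M : ℕ} (ρ : Matrix (Fin M → Fin d) (Fin M → Fin d) ℂ) (l k : Fin d) :
    Matrix (Fin (M + 1) → Fin d) (Fin (M + 1) → Fin d) ℂ :=
  of fun f g => ρ (fun i => f i.castSucc) (fun i => g i.castSucc) *
    (if f (Fin.last M) = l then 1 else 0) * (if g (Fin.last M) = k then 1 else 0)

lemma tensorKetBra_smul {d M : ℕ} (c : ℂ) (ρ : Matrix (Fin M → Fin d) (Fin M → Fin d) ℂ)
    (l k : Fin d) : tensorKetBra (c • ρ) l k = c • tensorKetBra ρ l k := by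
  ext f g
  simp [tensorKetBra]

lemma sum_conj_mul_trace_tensorKetBra_mul {d M : ℕ}
    (P : Matrix (Fin (M + 1) → Fin d) (Fin (M + 1) → Fin d) ℂ) (χ : Fin d → ℂ) :
    ∑ k, ∑ l, conj (χ k) * χ l *
        trace (tensorKetBra (vecMulVec (vecPow M χ) (star (vecPow M χ))) l k * P) =
      star (vecPow (M + 1) χ) ⬝ᵥ P *ᵥ vecPow (M + 1) χ := by
  -- `u l` is the vector `χ^{⊗M} ⊗ |l⟩`
  let u (l : Fin d) : (Fin (M + 1) → Fin d) → ℂ := fun f =>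
    vecPow M χ (fun i => f i.castSucc) * if f (Fin.last M) = l then 1 else 0
  have hket (l k : Fin d) :
      tensorKetBra (vecMulVec (vecPow M χ) (star (vecPow M χ))) l k =
        vecMulVec (u l) (star (u k)) := by
    ext f g
    simp [tensorKetBra, vecMulVec_apply, u, apply_ite star]
  have hsum : ∑ l, χ l • u l = vecPow (M + 1) χ := by
    ext f
    simp [u, vecPow_succ, mul_comm]
  calc _ = ∑ k, ∑ l, conj (χ k) * χ l * (star (u k) ⬝ᵥ P *ᵥ u l) := by
        simp only [hket, vecMulVec_mul, trace_vecMulVec, dotProduct_comm (u _), dotProduct_mulVec]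
    _ = star (∑ k, χ k • u k) ⬝ᵥ P *ᵥ ∑ l, χ l • u l := by
        simp only [star_sum, star_smul, sum_dotProduct, dotProduct_sum, mulVec_sum, mulVec_smul,
          smul_dotProduct, dotProduct_smul, smul_eq_mul, Complex.star_def, mul_sum]
        rw [sum_comm]
        exact sum_congr rfl fun k _ => sum_congr rfl fun l _ => by ring
    _ = _ := by rw [hsum]

noncomputable def productState {d : ℕ} (M : ℕ) (χ : Fin d → ℂ) :
    Matrix (Fin M → Fin d) (Fin M → Fin d) ℂ :=
  ((star χ ⬝ᵥ χ) ^ M)⁻¹ • vecMulVec (vecPow M χ) (star (vecPow M χ))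

section ProductState

variable {d M : ℕ} (χ : Fin d → ℂ)

lemma posSemidef_productState : (productState M χ).PosSemidef :=
  (posSemidef_vecMulVec_self_star _).smul <|
    inv_nonneg.2 <| pow_nonneg (dotProduct_star_self_nonneg χ) M

lemma trace_productState {χ : Fin d → ℂ} (hχ : χ ≠ 0) : (productState M χ).trace = 1 := by
  rw [productState, trace_smul, trace_vecMulVec, star_vecPow, vecPow_dotProduct_vecPow,
    dotProduct_comm χ, smul_eq_mul, inv_mul_cancel₀]
  exact pow_ne_zero _ (dotProduct_star_self_eq_zero.not.2 hχ)

lemma symProj_mul_productState_mul_symProj :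
    symProj d M * productState M χ * symProj d M = productState M χ := by
  have hbra : star (vecPow M χ) ᵥ* symProj d M = star (vecPow M χ) := by
    conv_lhs => rw [← symProj_isHermitian.eq]
    rw [← star_mulVec, symProj_mulVec_vecPow]
  rw [productState, Matrix.mul_smul, Matrix.smul_mul, mul_vecMulVec, vecMulVec_mul,
    symProj_mulVec_vecPow, hbra]

end ProductState

theorem herm_on_sym_vanishes_general (d M : ℕ)
    (P : Matrix (Fin (M + 1) → Fin d) (Fin (M + 1) → Fin d) ℂ)
    (hsupp : symProj d (M + 1) * P * symProj d (M + 1) = P)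
    (h0 : ∀ ρ : Matrix (Fin M → Fin d) (Fin M → Fin d) ℂ,
      ρ.PosSemidef → ρ.trace = 1 → symProj d M * ρ * symProj d M = ρ →
      ∀ k l : Fin d,
        Matrix.trace
          ((Matrix.of fun f g : Fin (M + 1) → Fin d =>
              ρ (fun i => f i.castSucc) (fun i => g i.castSucc) *
              (if f (Fin.last M) = l then (1 : ℂ) else 0) *
              (if g (Fin.last M) = k then (1 : ℂ) else 0)) * P) = 0) :
    P = 0 := by
  refine eq_zero_of_symProj_mul_mul_symProj_eq hsupp
    (star_vecPow_dotProduct_mulVec_eq_zero fun χ => ?_)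
  obtain rfl | hχ := eq_or_ne χ 0
  · have hzero : vecPow (M + 1) (0 : Fin d → ℂ) = 0 := funext fun x => by simp [vecPow_succ]
    simp [hzero]
  have hstate : ∀ k l, trace (tensorKetBra (productState M χ) l k * P) = 0 :=
    h0 _ (posSemidef_productState χ) (trace_productState hχ)
      (symProj_mul_productState_mul_symProj χ)
  have hc : ((star χ ⬝ᵥ χ) ^ M)⁻¹ ≠ 0 :=
    inv_ne_zero (pow_ne_zero _ (dotProduct_star_self_eq_zero.not.2 hχ))
  rw [← sum_conj_mul_trace_tensorKetBra_mul]
  refine sum_eq_zero fun k _ => sum_eq_zero fun l _ => ?_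
  have hkl := hstate k l
  rw [productState, tensorKetBra_smul, smul_mul, trace_smul, smul_eq_mul] at hkl
  rw [(mul_eq_zero.1 hkl).resolve_left hc, mul_zero]

/-- If a Hermitian operator `P̂` on `Sym^{M+1}(ℂ^d)` satisfies
`Tr[(ρ ⊗ |l⟩⟨k|) P̂] = 0` for every density matrix `ρ` supported on
`Sym^M(ℂ^d)` and all computational basis vectors `|k⟩, |l⟩`, then `P̂ = 0`. -/
theorem herm_on_sym_vanishes (d M : ℕ)
    (P : Matrix (Fin (M + 1) → Fin d) (Fin (M + 1) → Fin d) ℂ)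
    (hherm : P.IsHermitian)
    (hsupp : symProj d (M + 1) * P * symProj d (M + 1) = P)
    (h0 : ∀ ρ : Matrix (Fin M → Fin d) (Fin M → Fin d) ℂ,
      ρ.PosSemidef → ρ.trace = 1 → symProj d M * ρ * symProj d M = ρ →
      ∀ k l : Fin d,
        Matrix.trace
          ((Matrix.of fun f g : Fin (M + 1) → Fin d =>
              ρ (fun i => f i.castSucc) (fun i => g i.castSucc) *
              (if f (Fin.last M) = l then (1 : ℂ) else 0) *
              (if g (Fin.last M) = k then (1 : ℂ) else 0)) * P) = 0) :
    P = 0 :=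
  herm_on_sym_vanishes_general d M P hsupp h0
end

section
/- If ρ = Σ_r p_r |ψ_r⟩⟨ψ_r| with |ψ_r⟩ ∈ ℂ^d and the channel E(ρ) = (M/(M+d))ρ + (1/(M+d))I_d, then for any pure state ψ, Tr[|ψ⟩⟨ψ| E(|ψ⟩⟨ψ|)] = (M+1)/(M+d), and this equals the optimal fidelity of estimating |ψ⟩^{⊗M}, matching the optimal M→∞ universal cloning fidelity. -/
open scoped BigOperators

/-- For the depolarizing-type channel `E(ρ) = (M/(M+d))ρ + (1/(M+d))I_d`, the
fidelity on any pure state is `⟨ψ|E(|ψ⟩⟨ψ|)|ψ⟩ = (M+1)/(M+d)`, which is the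
optimal fidelity of estimating `|ψ⟩^{⊗M}` (the optimal `M → ∞` universal
cloning fidelity). -/
theorem depolarizing_fidelity (d M : ℕ)
    (E : Matrix (Fin d) (Fin d) ℂ → Matrix (Fin d) (Fin d) ℂ)
    (hE : ∀ ρ : Matrix (Fin d) (Fin d) ℂ,
      E ρ = (((M : ℕ) : ℂ) / ((M + d : ℕ) : ℂ)) • ρ
        + (((M + d : ℕ) : ℂ))⁻¹ • (1 : Matrix (Fin d) (Fin d) ℂ))
    (ψ : Fin d → ℂ) (hψ : ∑ j, ψ j * star (ψ j) = 1) :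
    ∑ a, ∑ b, star (ψ a) * (E (projOp ψ)) a b * ψ b
      = ((M + 1 : ℕ) : ℂ) / ((M + d : ℕ) : ℂ) := by
  have hd0 : d ≠ 0 := by
    rintro rfl
    simp at hψ
  have hMd : (((M + d : ℕ)) : ℂ) ≠ 0 := by
    exact_mod_cast (Nat.add_pos_right M (Nat.pos_of_ne_zero hd0)).ne'
  have h1 : ∑ a, star (ψ a) * ψ a = 1 := by
    rw [← hψ]; exact Finset.sum_congr rfl fun j _ => mul_comm _ _
  have expand : ∀ a b, star (ψ a) * (E (projOp ψ)) a b * ψ b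
      = ((M : ℂ) / ((M + d : ℕ) : ℂ)) * ((star (ψ a) * ψ a) * (star (ψ b) * ψ b))
        + (((M + d : ℕ) : ℂ))⁻¹ * (if b = a then star (ψ a) * ψ a else 0) := by
    intro a b
    rw [hE]
    simp only [Matrix.add_apply, Matrix.smul_apply, Matrix.one_apply, projOp,
      Matrix.of_apply, smul_eq_mul]
    by_cases h : a = b
    · subst h; simp; ring
    · rw [if_neg h, if_neg (Ne.symm h)]; simp; ring
  calc ∑ a, ∑ b, star (ψ a) * (E (projOp ψ)) a b * ψ b
      = ∑ a, (((M : ℂ) / ((M + d : ℕ) : ℂ)) * (star (ψ a) * ψ a)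
          + (((M + d : ℕ) : ℂ))⁻¹ * (star (ψ a) * ψ a)) := by
        refine Finset.sum_congr rfl fun a _ => ?_
        rw [Finset.sum_congr rfl fun b _ => expand a b, Finset.sum_add_distrib]
        simp only [← Finset.mul_sum]
        rw [Finset.sum_ite_eq', if_pos (Finset.mem_univ a), h1, mul_one]
    _ = ((M + 1 : ℕ) : ℂ) / ((M + d : ℕ) : ℂ) := by
        rw [Finset.sum_add_distrib, ← Finset.mul_sum, ← Finset.mul_sum, h1, mul_one, mul_one]
        push_cast
        field_simp
end
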